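/- arXiv:2502.04575 — 4 statements merged into one kernel-verified Lean document; each statement's English description precedes it below -/
import Mathlib

section
/- Suppose probability densities π₀, ..., π_M on ℝ^d are given by π_ℓ = f_ℓ/Z_ℓ with f_ℓ > 0 measurable and Z_ℓ = ∫ f_ℓ, and suppose transition kernels F₁, ..., F_M are such that π_ℓ is invariant for F_ℓ and F_ℓ(x,·) is absolutely continuous with positive density. Define the forward path measure P⃗(x_{0:M}) = π₀(x₀)∏_{ℓ=1}^M F_ℓ(x_{ℓ-1}, x_ℓ) and the work W(x_{0:M}) = Σ_{ℓ=0}^{M-1} log(f_ℓ(x_ℓ)/f_{ℓ+1}(x_ℓ)). Then E_{P⃗}[exp(-W)] = Z_M/Z₀. -/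
/-!
Multiplying the forward path density by `exp (-W)` and by `Z_0` turns it into the density
`f_M(x_M) ∏_ℓ B_ℓ(x_ℓ, x_{ℓ-1})` of the chain run backwards from `f_M` through the time-reversed
kernels `B_ℓ(x, x') = F_ℓ(x', x) f_ℓ(x') / f_ℓ(x)`: the ratios `f_{ℓ+1}(x_ℓ) / f_ℓ(x_ℓ)`
telescope against the ratios inside the `B_ℓ`. Invariance of `f_ℓ` under `F_ℓ` says exactly
that each `B_ℓ` is a Markov kernel, so integrating out `x_0, …, x_{M-1}` in turn leaves
`∫ f_M / Z_0 = Z_M / Z_0`.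
-/

open MeasureTheory
open scoped ENNReal

theorem Fin.mul_prod_div_castSucc_eq_mul_prod_div_succ {K : Type*} [Field K] {n : ℕ}
    (a : Fin (n + 1) → K) (ha : ∀ i, a i ≠ 0) (b : Fin n → K) :
    a 0 * ∏ i, b i / a i.castSucc = a (Fin.last n) * ∏ i, b i / a i.succ := by
  have h : a 0 * ∏ i : Fin n, a i.succ = a (Fin.last n) * ∏ i : Fin n, a i.castSucc := by
    rw [← Fin.prod_univ_succ, Fin.prod_univ_castSucc, mul_comm]
  have hs : ∏ i : Fin n, a i.succ ≠ 0 := Finset.prod_ne_zero_iff.2 fun i _ ↦ ha _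
  have hc : ∏ i : Fin n, a i.castSucc ≠ 0 := Finset.prod_ne_zero_iff.2 fun i _ ↦ ha _
  rw [Finset.prod_div_distrib, Finset.prod_div_distrib]
  field_simp
  linear_combination (∏ i, b i) * h

section
variable {α : Type*} [MeasurableSpace α] {μ : Measure α}

theorem lintegral_pi_fin_succ [SigmaFinite μ] {n : ℕ} (G : α × (Fin n → α) → ℝ≥0∞)
    (hG : Measurable G) :
    ∫⁻ x, G (x 0, Fin.tail x) ∂Measure.pi (fun _ ↦ μ) =
      ∫⁻ y, ∫⁻ a, G (a, y) ∂μ ∂Measure.pi (fun _ ↦ μ) := by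
  rw [← ((measurePreserving_piFinSuccAbove (fun _ ↦ μ) 0).symm).lintegral_comp_emb
    (MeasurableEquiv.measurableEmbedding _), ← lintegral_prod_symm _ hG.aemeasurable]
  simp [MeasurableEquiv.piFinSuccAbove_symm_apply, Fin.insertNthEquiv]

theorem lintegral_reversed_markov_path [SigmaFinite μ] {n : ℕ} (ρ : α → ℝ≥0∞)
    (hρ : Measurable ρ) (B : Fin n → α → α → ℝ≥0∞)
    (hB : ∀ ℓ, Measurable (Function.uncurry (B ℓ))) (hB_markov : ∀ ℓ x, ∫⁻ x', B ℓ x x' ∂μ = 1) :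
    ∫⁻ x, ρ (x (Fin.last n)) * ∏ ℓ, B ℓ (x ℓ.succ) (x ℓ.castSucc) ∂Measure.pi (fun _ ↦ μ) =
      ∫⁻ a, ρ a ∂μ := by
  induction n with
  | zero =>
    simp only [Finset.univ_eq_empty, Finset.prod_empty, mul_one]
    exact (measurePreserving_funUnique μ (Fin 1)).lintegral_comp_emb
      (MeasurableEquiv.measurableEmbedding _) ρ
  | succ n ih =>
    set H : (Fin (n + 1) → α) → ℝ≥0∞ := fun y ↦
      ρ (y (Fin.last n)) * ∏ ℓ : Fin n, B ℓ.succ (y ℓ.succ) (y ℓ.castSucc)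
    have hH : Measurable H := by fun_prop
    calc _ = ∫⁻ x : Fin (n + 2) → α, B 0 (Fin.tail x 0) (x 0) * H (Fin.tail x)
            ∂Measure.pi (fun _ ↦ μ) := by
          refine lintegral_congr fun x ↦ ?_
          simp only [H, Fin.prod_univ_succ, Fin.tail, Fin.succ_last, Fin.succ_castSucc,
            Fin.castSucc_zero]
          ring
      _ = ∫⁻ y, (∫⁻ a, B 0 (y 0) a ∂μ) * H y ∂Measure.pi (fun _ ↦ μ) := by
          rw [lintegral_pi_fin_succ (fun q ↦ B 0 (q.2 0) q.1 * H q.2) (by fun_prop)]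
          exact lintegral_congr fun y ↦
            lintegral_mul_const (H y) ((hB 0).comp measurable_prodMk_left)
      _ = _ := by
        simp only [hB_markov, one_mul]
        exact ih (fun ℓ ↦ B ℓ.succ) (fun ℓ ↦ hB ℓ.succ) (fun ℓ ↦ hB_markov ℓ.succ)

theorem lintegral_ofReal_eq_of_integral_eq {g : α → ℝ} {c : ℝ} (hg : 0 ≤ g)
    (h : ∫ x, g x ∂μ = c) (hc : 0 < c) : ∫⁻ x, ENNReal.ofReal (g x) ∂μ = ENNReal.ofReal c := by
  rw [← h, ofReal_integral_eq_lintegral_ofReal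
    (Integrable.of_integral_ne_zero (h ▸ hc.ne')) (ae_of_all _ hg)]

noncomputable def backwardKernel (f : α → ℝ) (F : α → α → ℝ) (x x' : α) : ℝ≥0∞ :=
  ENNReal.ofReal (F x' x * f x' / f x)

theorem measurable_backwardKernel {f : α → ℝ} {F : α → α → ℝ} (hf : Measurable f)
    (hF : Measurable (Function.uncurry F)) :
    Measurable (Function.uncurry (backwardKernel f F)) :=
  ENNReal.measurable_ofReal.comp
    (((hF.comp measurable_swap).mul (hf.comp measurable_snd)).div (hf.comp measurable_fst))

theorem lintegral_backwardKernel {f : α → ℝ} {F : α → α → ℝ} (hf : ∀ x, 0 < f x)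
    (hF : ∀ x x', 0 ≤ F x x') (y : α) (h_inv : ∫ x, F x y * f x ∂μ = f y) :
    ∫⁻ x', backwardKernel f F y x' ∂μ = 1 := by
  have : ∫ x, F x y * f x / f y ∂μ = 1 := by rw [integral_div, h_inv, div_self (hf y).ne']
  rw [← ENNReal.ofReal_one]
  exact lintegral_ofReal_eq_of_integral_eq
    (fun x ↦ div_nonneg (mul_nonneg (hF x y) (hf x).le) (hf y).le) this one_pos

end

theorem ofReal_weighted_forward_path_eq_backward_path {α : Type*} {n : ℕ}
    (f : Fin (n + 1) → α → ℝ) (F : Fin n → α → α → ℝ) (hf : ∀ ℓ x, 0 < f ℓ x)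
    (hF : ∀ ℓ x y, 0 ≤ F ℓ x y) (x : Fin (n + 1) → α) :
    ENNReal.ofReal ((∏ ℓ : Fin n, f ℓ.succ (x ℓ.castSucc) / f ℓ.castSucc (x ℓ.castSucc)) *
        (f 0 (x 0) * ∏ ℓ, F ℓ (x ℓ.castSucc) (x ℓ.succ))) =
      ENNReal.ofReal (f (Fin.last n) (x (Fin.last n))) *
        ∏ ℓ, backwardKernel (f ℓ.succ) (F ℓ) (x ℓ.succ) (x ℓ.castSucc) := by
  have h_weight := Fin.mul_prod_div_castSucc_eq_mul_prod_div_succ (fun k ↦ f k (x k))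
    (fun k ↦ (hf k _).ne') (fun ℓ ↦ F ℓ (x ℓ.castSucc) (x ℓ.succ) * f ℓ.succ (x ℓ.castSucc))
  simp only [backwardKernel]
  rw [← ENNReal.ofReal_prod_of_nonneg fun ℓ _ ↦ div_nonneg
      (mul_nonneg (hF _ _ _) (hf _ _).le) (hf _ _).le,
    ← ENNReal.ofReal_mul (hf _ _).le, ← h_weight]
  congr 1
  simp only [Finset.prod_div_distrib, Finset.prod_mul_distrib]
  ring

theorem ais_identity_general (d M : ℕ)
    (f : Fin (M + 1) → EuclideanSpace ℝ (Fin d) → ℝ)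
    (hf_pos : ∀ ℓ x, 0 < f ℓ x) (hf_meas : ∀ ℓ, Measurable (f ℓ))
    (Z : Fin (M + 1) → ℝ) (hZ : ∀ ℓ, Z ℓ = ∫ x, f ℓ x) (hZ_pos : ∀ ℓ, 0 < Z ℓ)
    (F : Fin M → EuclideanSpace ℝ (Fin d) → EuclideanSpace ℝ (Fin d) → ℝ)
    (hF_meas : ∀ ℓ, Measurable (Function.uncurry (F ℓ)))
    (hF_pos : ∀ ℓ x y, 0 < F ℓ x y)
    (hF_inv : ∀ ℓ y, ∫ x, F ℓ x y * (f ℓ.succ x / Z ℓ.succ) = f ℓ.succ y / Z ℓ.succ)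
    (W : (Fin (M + 1) → EuclideanSpace ℝ (Fin d)) → ℝ)
    (hW : ∀ x, W x = ∑ ℓ : Fin M,
      Real.log (f ℓ.castSucc (x ℓ.castSucc) / f ℓ.succ (x ℓ.castSucc)))
    (p : (Fin (M + 1) → EuclideanSpace ℝ (Fin d)) → ℝ)
    (hp : ∀ x, p x = (f 0 (x 0) / Z 0) * ∏ ℓ : Fin M, F ℓ (x ℓ.castSucc) (x ℓ.succ)) :
    ∫⁻ x, ENNReal.ofReal (Real.exp (-(W x)) * p x) =
      ENNReal.ofReal (Z (Fin.last M) / Z 0) := by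
  set B := fun ℓ ↦ backwardKernel (f ℓ.succ) (F ℓ)
  have hF_nonneg : ∀ ℓ x y, 0 ≤ F ℓ x y := fun ℓ x y ↦ (hF_pos ℓ x y).le
  have hB_markov : ∀ ℓ x, ∫⁻ x', B ℓ x x' = 1 := fun ℓ x ↦ by
    refine lintegral_backwardKernel (hf_pos _) (hF_nonneg ℓ) x ?_
    simpa only [← mul_div_assoc, integral_div, div_left_inj' (hZ_pos ℓ.succ).ne'] using hF_inv ℓ x
  have hB_meas : ∀ ℓ, Measurable (Function.uncurry (B ℓ)) := fun ℓ ↦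
    measurable_backwardKernel (hf_meas _) (hF_meas ℓ)
  have h_path : ∀ x, ENNReal.ofReal (Real.exp (-(W x)) * p x) = ENNReal.ofReal (Z 0)⁻¹ *
      (ENNReal.ofReal (f (Fin.last M) (x (Fin.last M))) *
        ∏ ℓ, B ℓ (x ℓ.succ) (x ℓ.castSucc)) := fun x ↦ by
    rw [← ofReal_weighted_forward_path_eq_backward_path f F hf_pos hF_nonneg,
      ← ENNReal.ofReal_mul (inv_nonneg.2 (hZ_pos 0).le), hp, hW, ← Finset.sum_neg_distrib,
      Real.exp_sum]
    simp only [← Real.log_inv, inv_div, Real.exp_log (div_pos (hf_pos _ _) (hf_pos _ _))]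
    congr 1
    ring
  calc _ = ENNReal.ofReal (Z 0)⁻¹ * ∫⁻ x : Fin (M + 1) → EuclideanSpace ℝ (Fin d),
        ENNReal.ofReal (f (Fin.last M) (x (Fin.last M))) *
          ∏ ℓ, B ℓ (x ℓ.succ) (x ℓ.castSucc) := by
        simp_rw [h_path]
        exact lintegral_const_mul _ (by fun_prop)
    _ = ENNReal.ofReal (Z 0)⁻¹ * ENNReal.ofReal (Z (Fin.last M)) := by
        rw [volume_pi, lintegral_reversed_markov_path (fun a ↦ ENNReal.ofReal (f (Fin.last M) a))
          (by fun_prop) B hB_meas hB_markov,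
          lintegral_ofReal_eq_of_integral_eq (fun x ↦ (hf_pos _ x).le) (hZ _).symm (hZ_pos _)]
    _ = _ := by rw [← ENNReal.ofReal_mul (inv_nonneg.2 (hZ_pos 0).le), inv_mul_eq_div]

/-- Annealed importance sampling identity (Neal 2001): given positive unnormalized densities
`f_0, ..., f_M` on `ℝ^d` with normalizing constants `Z_ℓ`, and transition kernels
`F_1, ..., F_M` leaving the corresponding normalized densities invariant, the forward path
measure `P⃗(x_{0:M}) = π₀(x₀)∏_ℓ F_ℓ(x_{ℓ-1}, x_ℓ)` and the work
`W(x_{0:M}) = Σ_{ℓ<M} log(f_ℓ(x_ℓ)/f_{ℓ+1}(x_ℓ))` satisfy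
`E_{P⃗}[exp(-W)] = Z_M / Z_0`. -/
theorem ais_identity (d M : ℕ)
    (f : Fin (M + 1) → EuclideanSpace ℝ (Fin d) → ℝ)
    (hf_pos : ∀ ℓ x, 0 < f ℓ x) (hf_meas : ∀ ℓ, Measurable (f ℓ))
    (Z : Fin (M + 1) → ℝ) (hZ : ∀ ℓ, Z ℓ = ∫ x, f ℓ x) (hZ_pos : ∀ ℓ, 0 < Z ℓ)
    (F : Fin M → EuclideanSpace ℝ (Fin d) → EuclideanSpace ℝ (Fin d) → ℝ)
    (hF_meas : ∀ ℓ, Measurable (Function.uncurry (F ℓ)))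
    (hF_pos : ∀ ℓ x y, 0 < F ℓ x y)
    (hF_kernel : ∀ ℓ x, ∫ y, F ℓ x y = 1)
    (hF_inv : ∀ ℓ y, ∫ x, F ℓ x y * (f ℓ.succ x / Z ℓ.succ) = f ℓ.succ y / Z ℓ.succ)
    (W : (Fin (M + 1) → EuclideanSpace ℝ (Fin d)) → ℝ)
    (hW : ∀ x, W x = ∑ ℓ : Fin M,
      Real.log (f ℓ.castSucc (x ℓ.castSucc) / f ℓ.succ (x ℓ.castSucc)))
    (p : (Fin (M + 1) → EuclideanSpace ℝ (Fin d)) → ℝ)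
    (hp : ∀ x, p x = (f 0 (x 0) / Z 0) * ∏ ℓ : Fin M, F ℓ (x ℓ.castSucc) (x ℓ.succ)) :
    ∫⁻ x, ENNReal.ofReal (Real.exp (-(W x)) * p x) =
      ENNReal.ofReal (Z (Fin.last M) / Z 0) :=
  ais_identity_general d M f hf_pos hf_meas Z hZ hZ_pos F hF_meas hF_pos hF_inv W hW p hp
end

section
/- In the setting of annealed importance sampling with forward path measure P⃗, backward path measure P⃖ (built from the backward kernels B_ℓ of the forward kernels F_ℓ with invariant distributions π_ℓ), and reference path measure P(x_{0:M}) = π₀(x₀)∏ F*_ℓ(x_{ℓ-1}, x_ℓ) where each F*_ℓ transports π_{θ_{ℓ-1}} exactly to π_{θ_ℓ}, one has KL(P‖P⃖) = KL(P‖P⃗) + Σ_{ℓ=1}^M KL(π_{θ_{ℓ-1}}‖π_{θ_ℓ}). In particular KL(P‖P⃖) ≥ KL(P‖P⃗). -/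
open MeasureTheory

open scoped ENNReal

/-! The ratio of the forward to the backward path density telescopes:
`P⃗(x) / P⃖(x) = ∏ ℓ π_{ℓ-1}(x_{ℓ-1}) / π_ℓ(x_{ℓ-1})`, hence
`log (P / P⃖) = log (P / P⃗) + ∑ ℓ log (π_{ℓ-1} / π_ℓ)(x_{ℓ-1})` pointwise.
Since every `F*_ℓ` transports `π_{θ_{ℓ-1}}` to `π_{θ_ℓ}`, the coordinate `x_{ℓ-1}` has law
`π_{θ_{ℓ-1}}` under `P`, so integrating against `P` turns the ℓ-th summand into
`KL(π_{θ_{ℓ-1}} ‖ π_{θ_ℓ})`, which is nonnegative by Gibbs' inequality. -/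

theorem Fin.prod_castSucc_div_succ_of_ne_zero {G : Type*} [CommGroupWithZero G] {n : ℕ}
    {f : Fin (n + 1) → G} (hf : ∀ i, f i ≠ 0) :
    ∏ i : Fin n, f i.castSucc / f i.succ = f 0 / f (Fin.last n) := by
  induction n with
  | zero => simp [div_self (hf 0)]
  | succ n ih =>
    have h := ih (f := fun i => f i.castSucc) fun i => hf i.castSucc
    simp only [Fin.castSucc_zero] at h
    rw [Fin.prod_univ_castSucc]
    simp only [Fin.succ_castSucc]
    rw [h, Fin.succ_last]
    exact div_mul_div_cancel₀ (hf _)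

section PathDensity

variable {α R : Type*} {n : ℕ}

def pathDensity [CommMonoid R] (ρ₀ : α → R) (K : Fin n → α → α → R) (x : Fin (n + 1) → α) :
    R :=
  ρ₀ (x 0) * ∏ ℓ : Fin n, K ℓ (x ℓ.castSucc) (x ℓ.succ)

-- `π_M(x_M) ∏ B_ℓ(x_ℓ, x_{ℓ-1})` with the backward kernels
-- `B_ℓ(x, x') = π_ℓ(x') F_ℓ(x', x) / π_ℓ(x)`.
def backwardPathDensity [CommGroupWithZero R] (π : Fin (n + 1) → α → R)
    (F : Fin n → α → α → R) (x : Fin (n + 1) → α) : R :=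
  π (Fin.last n) (x (Fin.last n)) *
    ∏ ℓ : Fin n, (π ℓ.succ (x ℓ.castSucc) / π ℓ.succ (x ℓ.succ)) * F ℓ (x ℓ.castSucc) (x ℓ.succ)

theorem pathDensity_snoc [CommMonoid R] (ρ₀ : α → R) (K : Fin (n + 1) → α → α → R)
    (x : Fin (n + 1) → α) (y : α) :
    pathDensity ρ₀ K (Fin.snoc x y) =
      pathDensity ρ₀ (fun ℓ => K ℓ.castSucc) x * K (Fin.last n) (x (Fin.last n)) y := by
  simp only [pathDensity, Fin.prod_univ_castSucc, Fin.succ_castSucc, Fin.snoc_castSucc,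
    Fin.succ_last, Fin.snoc_last, Fin.snoc_apply_zero, mul_assoc]

theorem pathDensity_pos [CommSemiring R] [PartialOrder R] [IsStrictOrderedRing R]
    {ρ₀ : α → R} {K : Fin n → α → α → R} (hρ₀ : ∀ x, 0 < ρ₀ x) (hK : ∀ ℓ x y, 0 < K ℓ x y)
    (x : Fin (n + 1) → α) : 0 < pathDensity ρ₀ K x :=
  mul_pos (hρ₀ _) (Finset.prod_pos fun ℓ _ => hK ℓ _ _)

theorem measurable_pathDensity [MeasurableSpace α] [CommMonoid R] [MeasurableSpace R]
    [MeasurableMul₂ R] {ρ₀ : α → R} {K : Fin n → α → α → R} (hρ₀ : Measurable ρ₀)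
    (hK : ∀ ℓ, Measurable (Function.uncurry (K ℓ))) : Measurable (pathDensity ρ₀ K) := by
  unfold pathDensity
  fun_prop

theorem pathDensity_div_backwardPathDensity [CommGroupWithZero R] {π : Fin (n + 1) → α → R}
    {F : Fin n → α → α → R} (hπ : ∀ i x, π i x ≠ 0) (hF : ∀ ℓ x y, F ℓ x y ≠ 0)
    (x : Fin (n + 1) → α) :
    pathDensity (π 0) F x / backwardPathDensity π F x =
      ∏ ℓ : Fin n, π ℓ.castSucc (x ℓ.castSucc) / π ℓ.succ (x ℓ.castSucc) := by
  have htel := Fin.prod_castSucc_div_succ_of_ne_zero (f := fun i => π i (x i)) fun i => hπ i _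
  have hF_prod : ∏ ℓ : Fin n, F ℓ (x ℓ.castSucc) (x ℓ.succ) ≠ 0 :=
    Finset.prod_ne_zero_iff.2 fun ℓ _ => hF ℓ _ _
  simp only [pathDensity, backwardPathDensity, Finset.prod_mul_distrib]
  have hRHS : ∏ ℓ : Fin n, π ℓ.castSucc (x ℓ.castSucc) / π ℓ.succ (x ℓ.castSucc) =
      (∏ ℓ : Fin n, π ℓ.castSucc (x ℓ.castSucc) / π ℓ.succ (x ℓ.succ)) /
        ∏ ℓ : Fin n, π ℓ.succ (x ℓ.castSucc) / π ℓ.succ (x ℓ.succ) := by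
    rw [← Finset.prod_div_distrib]
    exact Finset.prod_congr rfl fun ℓ _ => (div_div_div_cancel_right₀ (hπ _ _) _ _).symm
  rw [hRHS, htel, ← mul_assoc, mul_div_mul_right _ _ hF_prod, div_div]

end PathDensity

section WithDensity

variable {α β : Type*} [MeasurableSpace α] [MeasurableSpace β] {μ : Measure α} {ν : Measure β}
  {p : α → ℝ}

theorem lintegral_ofReal_eq_ofReal_of_integral_eq {f : α → ℝ} (hf : ∀ x, 0 ≤ f x) {c : ℝ}
    (hc : c ≠ 0) (h : ∫ x, f x ∂μ = c) : ∫⁻ x, ENNReal.ofReal (f x) ∂μ = ENNReal.ofReal c := by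
  rw [← h, ofReal_integral_eq_lintegral_ofReal (.of_integral_ne_zero (h ▸ hc))
    (ae_of_all _ hf)]

theorem integrable_withDensity_ofReal_iff (hp : Measurable p) (hp_nonneg : ∀ x, 0 ≤ p x)
    {g : α → ℝ} :
    Integrable g (μ.withDensity fun x => ENNReal.ofReal (p x)) ↔
      Integrable (fun x => p x * g x) μ := by
  rw [integrable_withDensity_iff_integrable_smul' hp.ennreal_ofReal
    (ae_of_all _ fun _ => ENNReal.ofReal_lt_top)]
  simp only [ENNReal.toReal_ofReal (hp_nonneg _), smul_eq_mul]

theorem integral_withDensity_ofReal (hp : Measurable p) (hp_nonneg : ∀ x, 0 ≤ p x)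
    (g : α → ℝ) :
    ∫ x, g x ∂(μ.withDensity fun x => ENNReal.ofReal (p x)) = ∫ x, p x * g x ∂μ := by
  rw [integral_withDensity_eq_integral_toReal_smul hp.ennreal_ofReal
    (ae_of_all _ fun _ => ENNReal.ofReal_lt_top)]
  simp only [ENNReal.toReal_ofReal (hp_nonneg _), smul_eq_mul]

theorem integrable_and_integral_mul_comp_of_map_withDensity {q : β → ℝ} {φ : α → β}
    (hp : Measurable p) (hp_nonneg : ∀ x, 0 ≤ p x) (hq : Measurable q)
    (hq_nonneg : ∀ y, 0 ≤ q y) (hφ : Measurable φ)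
    (hmap : (μ.withDensity fun x => ENNReal.ofReal (p x)).map φ =
      ν.withDensity fun y => ENNReal.ofReal (q y))
    {f : β → ℝ} (hf : Measurable f) (hqf : Integrable (fun y => q y * f y) ν) :
    Integrable (fun x => p x * f (φ x)) μ ∧ ∫ x, p x * f (φ x) ∂μ = ∫ y, q y * f y ∂ν := by
  rw [← integrable_withDensity_ofReal_iff hq hq_nonneg, ← hmap] at hqf
  rw [← integrable_withDensity_ofReal_iff hp hp_nonneg, ← integral_withDensity_ofReal hp hp_nonneg,
    ← integral_withDensity_ofReal hq hq_nonneg, ← hmap]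
  exact ⟨(integrable_map_measure hf.aestronglyMeasurable hφ.aemeasurable).1 hqf,
    (integral_map hφ.aemeasurable hf.aestronglyMeasurable).symm⟩

end WithDensity

section Marginal

variable {α : Type*} [MeasurableSpace α] (μ : Measure α) [SigmaFinite μ] {n : ℕ}

theorem lintegral_pi_fin_succ_eq_lintegral_snoc {f : (Fin (n + 1) → α) → ℝ≥0∞}
    (hf : Measurable f) :
    ∫⁻ x, f x ∂Measure.pi (fun _ => μ) =
      ∫⁻ x, ∫⁻ y, f (Fin.snoc x y) ∂μ ∂Measure.pi (fun _ => μ) := by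
  have he := (measurePreserving_piFinSuccAbove (fun _ : Fin (n + 1) => μ) (Fin.last n)).symm
  rw [← he.lintegral_comp hf]
  refine (lintegral_prod_symm _ (hf.comp he.measurable).aemeasurable).trans ?_
  simp [MeasurableEquiv.piFinSuccAbove, Fin.snocEquiv]

theorem lintegral_pathDensity_mul_comp_eval (ρ : Fin (n + 1) → α → ℝ≥0∞)
    (K : Fin n → α → α → ℝ≥0∞) (hρ₀ : Measurable (ρ 0))
    (hK : ∀ ℓ, Measurable (Function.uncurry (K ℓ))) (hK_one : ∀ ℓ x, ∫⁻ y, K ℓ x y ∂μ = 1)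
    (htransport : ∀ ℓ y, ∫⁻ x, ρ ℓ.castSucc x * K ℓ x y ∂μ = ρ ℓ.succ y) (k : Fin (n + 1))
    {g : α → ℝ≥0∞} (hg : Measurable g) :
    ∫⁻ x, pathDensity (ρ 0) K x * g (x k) ∂Measure.pi (fun _ => μ) = ∫⁻ y, ρ k y * g y ∂μ := by
  induction n generalizing g with
  | zero =>
    obtain rfl : k = 0 := Fin.fin_one_eq_zero k
    simp only [pathDensity, Finset.univ_eq_empty, Finset.prod_empty, mul_one]
    exact (measurePreserving_funUnique μ (Fin 1)).lintegral_comp (hρ₀.mul hg)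
  | succ n ih =>
    have ih' := ih (fun i => ρ i.castSucc) (fun ℓ => K ℓ.castSucc) (by simpa using hρ₀)
      (fun ℓ => hK _) (fun ℓ => hK_one _) (fun ℓ y => by simpa using htransport ℓ.castSucc y)
    simp only [Fin.castSucc_zero] at ih'
    have hP := measurable_pathDensity hρ₀ fun ℓ => hK (Fin.castSucc ℓ)
    have hK_last := hK (Fin.last n)
    rw [lintegral_pi_fin_succ_eq_lintegral_snoc μ (f := fun x => pathDensity (ρ 0) K x * g (x k))
      ((measurable_pathDensity hρ₀ hK).mul (hg.comp (measurable_pi_apply k)))]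
    simp only [pathDensity_snoc]
    -- For `k = last` the transport identity absorbs the last kernel; otherwise it integrates to 1.
    induction k using Fin.lastCases with
    | last =>
      simp only [Fin.snoc_last]
      rw [lintegral_lintegral_swap (by fun_prop)]
      refine lintegral_congr fun y => ?_
      have hKy : Measurable fun z => K (Fin.last n) z y := by fun_prop
      rw [lintegral_mul_const _ (by fun_prop), ih' (Fin.last n) hKy, ← Fin.succ_last,
        htransport]
    | cast j =>
      simp only [Fin.snoc_castSucc]
      rw [← ih' j hg]
      refine lintegral_congr fun x => ?_
      simp only [mul_right_comm _ _ (g (x j))]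
      rw [lintegral_const_mul _ (by fun_prop), hK_one, mul_one]

theorem map_eval_withDensity_pathDensity (ρ : Fin (n + 1) → α → ℝ≥0∞)
    (K : Fin n → α → α → ℝ≥0∞) (hρ : ∀ i, Measurable (ρ i))
    (hK : ∀ ℓ, Measurable (Function.uncurry (K ℓ))) (hK_one : ∀ ℓ x, ∫⁻ y, K ℓ x y ∂μ = 1)
    (htransport : ∀ ℓ y, ∫⁻ x, ρ ℓ.castSucc x * K ℓ x y ∂μ = ρ ℓ.succ y) (k : Fin (n + 1)) :
    ((Measure.pi fun _ => μ).withDensity (pathDensity (ρ 0) K)).map (fun x => x k) =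
      μ.withDensity (ρ k) := by
  refine Measure.ext_of_lintegral _ fun g hg => ?_
  rw [lintegral_map hg (measurable_pi_apply k),
    lintegral_withDensity_eq_lintegral_mul _ (measurable_pathDensity (hρ 0) hK) (by fun_prop),
    lintegral_withDensity_eq_lintegral_mul _ (hρ k) hg]
  exact lintegral_pathDensity_mul_comp_eval μ ρ K (hρ 0) hK hK_one htransport k hg

theorem map_eval_withDensity_ofReal_pathDensity {ρ : Fin (n + 1) → α → ℝ}
    {K : Fin n → α → α → ℝ} (hρ_pos : ∀ i x, 0 < ρ i x) (hρ : ∀ i, Measurable (ρ i))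
    (hK_nonneg : ∀ ℓ x y, 0 ≤ K ℓ x y) (hK : ∀ ℓ, Measurable (Function.uncurry (K ℓ)))
    (hK_one : ∀ ℓ x, ∫ y, K ℓ x y ∂μ = 1)
    (htransport : ∀ ℓ y, ∫ x, ρ ℓ.castSucc x * K ℓ x y ∂μ = ρ ℓ.succ y) (k : Fin (n + 1)) :
    ((Measure.pi fun _ => μ).withDensity fun x => ENNReal.ofReal (pathDensity (ρ 0) K x)).map
        (fun x => x k) = μ.withDensity fun y => ENNReal.ofReal (ρ k y) := by
  have hofReal : (fun x => ENNReal.ofReal (pathDensity (ρ 0) K x)) =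
      pathDensity (fun y => ENNReal.ofReal (ρ 0 y)) fun ℓ x y => ENNReal.ofReal (K ℓ x y) := by
    ext x
    rw [pathDensity, pathDensity, ENNReal.ofReal_mul (hρ_pos 0 _).le,
      ENNReal.ofReal_prod_of_nonneg fun ℓ _ => hK_nonneg ℓ _ _]
  rw [hofReal]
  refine map_eval_withDensity_pathDensity μ (fun i y => ENNReal.ofReal (ρ i y))
    (fun ℓ x y => ENNReal.ofReal (K ℓ x y))
    (fun i => (hρ i).ennreal_ofReal) (fun ℓ => (hK ℓ).ennreal_ofReal)
    (fun ℓ x => ?_) (fun ℓ y => ?_) k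
  · rw [lintegral_ofReal_eq_ofReal_of_integral_eq (hK_nonneg ℓ x) one_ne_zero (hK_one ℓ x),
      ENNReal.ofReal_one]
  · simp_rw [← ENNReal.ofReal_mul (hρ_pos _ _).le]
    exact lintegral_ofReal_eq_ofReal_of_integral_eq
      (fun x => mul_nonneg (hρ_pos _ x).le (hK_nonneg ℓ x y)) (hρ_pos _ y).ne' (htransport ℓ y)

end Marginal

theorem integral_mul_log_div_nonneg {α : Type*} [MeasurableSpace α] {μ : Measure α}
    {f g : α → ℝ} (hf : ∀ x, 0 ≤ f x) (hg : ∀ x, 0 < g x) (hf_int : Integrable f μ)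
    (hg_int : Integrable g μ) (hfg : ∫ x, f x ∂μ = ∫ x, g x ∂μ)
    (hlog : Integrable (fun x => f x * Real.log (f x / g x)) μ) :
    0 ≤ ∫ x, f x * Real.log (f x / g x) ∂μ := by
  have hpt : ∀ x, f x - g x ≤ f x * Real.log (f x / g x) := fun x => by
    have hkl_nonneg :=
      mul_nonneg (hg x).le (InformationTheory.klFun_nonneg (div_nonneg (hf x) (hg x).le))
    have hexpand : g x * InformationTheory.klFun (f x / g x) =
        f x * Real.log (f x / g x) + g x - f x := by
      rw [InformationTheory.klFun_apply, mul_sub, mul_add, ← mul_assoc,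
        mul_div_cancel₀ _ (hg x).ne']
      ring
    linarith
  calc 0 = ∫ x, f x - g x ∂μ := by rw [integral_sub hf_int hg_int, hfg, sub_self]
    _ ≤ _ := integral_mono (hf_int.sub hg_int) hlog hpt

theorem integral_mul_log_div_backwardPathDensity {α : Type*} [MeasurableSpace α]
    (μ : Measure α) [SigmaFinite μ] {n : ℕ} {π : Fin (n + 1) → α → ℝ}
    {F Fstar : Fin n → α → α → ℝ} (hπ_pos : ∀ i x, 0 < π i x) (hπ : ∀ i, Measurable (π i))
    (hF_pos : ∀ ℓ x y, 0 < F ℓ x y) (hFstar_pos : ∀ ℓ x y, 0 < Fstar ℓ x y)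
    (hFstar : ∀ ℓ, Measurable (Function.uncurry (Fstar ℓ)))
    (hFstar_one : ∀ ℓ x, ∫ y, Fstar ℓ x y ∂μ = 1)
    (htransport : ∀ ℓ y, ∫ x, π ℓ.castSucc x * Fstar ℓ x y ∂μ = π ℓ.succ y)
    (hint_fwd : Integrable (fun x => pathDensity (π 0) Fstar x *
      Real.log (pathDensity (π 0) Fstar x / pathDensity (π 0) F x)) (Measure.pi fun _ => μ))
    (hint_marg : ∀ ℓ : Fin n,
      Integrable (fun y => π ℓ.castSucc y * Real.log (π ℓ.castSucc y / π ℓ.succ y)) μ) :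
    ∫ x, pathDensity (π 0) Fstar x *
        Real.log (pathDensity (π 0) Fstar x / backwardPathDensity π F x)
        ∂Measure.pi (fun _ => μ) =
      ∫ x, pathDensity (π 0) Fstar x *
          Real.log (pathDensity (π 0) Fstar x / pathDensity (π 0) F x)
          ∂Measure.pi (fun _ => μ) +
        ∑ ℓ : Fin n, ∫ y, π ℓ.castSucc y * Real.log (π ℓ.castSucc y / π ℓ.succ y) ∂μ := by
  set P := pathDensity (π 0) Fstar
  have hP_pos : ∀ x, 0 < P x := pathDensity_pos (hπ_pos 0) hFstar_pos
  have hmarg : ∀ ℓ : Fin n,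
      Integrable (fun x => P x * Real.log (π ℓ.castSucc (x ℓ.castSucc) / π ℓ.succ (x ℓ.castSucc)))
        (Measure.pi fun _ => μ) ∧
      ∫ x, P x * Real.log (π ℓ.castSucc (x ℓ.castSucc) / π ℓ.succ (x ℓ.castSucc))
          ∂Measure.pi (fun _ => μ) =
        ∫ y, π ℓ.castSucc y * Real.log (π ℓ.castSucc y / π ℓ.succ y) ∂μ := fun ℓ =>
    integrable_and_integral_mul_comp_of_map_withDensity
      (measurable_pathDensity (hπ 0) hFstar) (fun x => (hP_pos x).le) (hπ _)
      (fun y => (hπ_pos _ y).le) (measurable_pi_apply _)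
      (map_eval_withDensity_ofReal_pathDensity μ hπ_pos hπ (fun ℓ x y => (hFstar_pos ℓ x y).le)
        hFstar hFstar_one htransport _)
      (by fun_prop) (hint_marg ℓ)
  have hsplit : ∀ x, P x * Real.log (P x / backwardPathDensity π F x) =
      P x * Real.log (P x / pathDensity (π 0) F x) +
        ∑ ℓ : Fin n, P x * Real.log (π ℓ.castSucc (x ℓ.castSucc) / π ℓ.succ (x ℓ.castSucc)) :=
    fun x => by
      have hfwd_pos := pathDensity_pos (hπ_pos 0) hF_pos x
      have hratio_pos (ℓ : Fin n) : 0 < π ℓ.castSucc (x ℓ.castSucc) / π ℓ.succ (x ℓ.castSucc) :=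
        div_pos (hπ_pos _ _) (hπ_pos _ _)
      rw [← div_mul_div_cancel₀ hfwd_pos.ne', pathDensity_div_backwardPathDensity
          (fun i x => (hπ_pos i x).ne') (fun ℓ x y => (hF_pos ℓ x y).ne'),
        Real.log_mul (div_pos (hP_pos x) hfwd_pos).ne'
          (Finset.prod_pos fun ℓ _ => hratio_pos ℓ).ne',
        Real.log_prod fun ℓ _ => (hratio_pos ℓ).ne', mul_add, Finset.mul_sum]
  rw [integral_congr_ae (ae_of_all _ hsplit),
    integral_add hint_fwd (integrable_finsetSum _ fun ℓ _ => (hmarg ℓ).1),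
    integral_finsetSum _ fun ℓ _ => (hmarg ℓ).1]
  exact congrArg _ (Finset.sum_congr rfl fun ℓ _ => (hmarg ℓ).2)

theorem ais_kl_decomposition_general (d M : ℕ)
    (πs : Fin (M + 1) → EuclideanSpace ℝ (Fin d) → ℝ)
    (hπ_pos : ∀ ℓ x, 0 < πs ℓ x) (hπ_meas : ∀ ℓ, Measurable (πs ℓ))
    (hπ_norm : ∀ ℓ, ∫ x, πs ℓ x = 1)
    (F Fstar : Fin M → EuclideanSpace ℝ (Fin d) → EuclideanSpace ℝ (Fin d) → ℝ)
    (hFs_meas : ∀ ℓ, Measurable (Function.uncurry (Fstar ℓ)))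
    (hF_pos : ∀ ℓ x y, 0 < F ℓ x y) (hFs_pos : ∀ ℓ x y, 0 < Fstar ℓ x y)
    (hFs_kernel : ∀ ℓ x, ∫ y, Fstar ℓ x y = 1)
    -- `F*_ℓ` transports `π_{θ_{ℓ-1}}` to `π_{θ_ℓ}`:
    (hFs_transport : ∀ ℓ y, ∫ x, πs ℓ.castSucc x * Fstar ℓ x y = πs ℓ.succ y)
    (p pr pl : (Fin (M + 1) → EuclideanSpace ℝ (Fin d)) → ℝ)
    (hp : ∀ x, p x = πs 0 (x 0) * ∏ ℓ : Fin M, Fstar ℓ (x ℓ.castSucc) (x ℓ.succ))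
    (hpr : ∀ x, pr x = πs 0 (x 0) * ∏ ℓ : Fin M, F ℓ (x ℓ.castSucc) (x ℓ.succ))
    (hpl : ∀ x, pl x = πs (Fin.last M) (x (Fin.last M)) *
      ∏ ℓ : Fin M, (πs ℓ.succ (x ℓ.castSucc) / πs ℓ.succ (x ℓ.succ)) *
        F ℓ (x ℓ.castSucc) (x ℓ.succ))
    (hint_pr : Integrable (fun x => p x * Real.log (p x / pr x)) volume)
    (hint_marg : ∀ ℓ : Fin M, Integrable
      (fun y => πs ℓ.castSucc y * Real.log (πs ℓ.castSucc y / πs ℓ.succ y)) volume) :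
    ((∫ x, p x * Real.log (p x / pl x)) =
      (∫ x, p x * Real.log (p x / pr x)) +
        ∑ ℓ : Fin M, ∫ y, πs ℓ.castSucc y * Real.log (πs ℓ.castSucc y / πs ℓ.succ y)) ∧
    (∫ x, p x * Real.log (p x / pr x)) ≤ ∫ x, p x * Real.log (p x / pl x) := by
  obtain rfl : p = pathDensity (πs 0) Fstar := funext hp
  obtain rfl : pr = pathDensity (πs 0) F := funext hpr
  obtain rfl : pl = backwardPathDensity πs F := funext hpl
  have hkl := integral_mul_log_div_backwardPathDensity volume hπ_pos hπ_meas hF_pos hFs_pos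
    hFs_meas hFs_kernel hFs_transport hint_pr hint_marg
  have hπ_int ℓ : Integrable (πs ℓ) := .of_integral_ne_zero (by rw [hπ_norm]; exact one_ne_zero)
  refine ⟨hkl, hkl ▸ le_add_of_nonneg_right (Finset.sum_nonneg fun ℓ _ => ?_)⟩
  exact integral_mul_log_div_nonneg (fun y => (hπ_pos _ y).le) (hπ_pos _) (hπ_int _) (hπ_int _)
    (by rw [hπ_norm, hπ_norm]) (hint_marg ℓ)

/-- KL decomposition for annealed importance sampling: with the forward path density `pr`
(built from kernels `F_ℓ` leaving `π_{θ_ℓ}` invariant), the backward path density `pl`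
(built from the backward kernels `B_ℓ(x,x') = (π_{θ_ℓ}(x')/π_{θ_ℓ}(x))F_ℓ(x',x)`), and the
reference path density `p` (built from kernels `F*_ℓ` transporting `π_{θ_{ℓ-1}}` exactly to
`π_{θ_ℓ}`), one has
`KL(P‖P⃖) = KL(P‖P⃗) + Σ_ℓ KL(π_{θ_{ℓ-1}}‖π_{θ_ℓ})`, and in particular
`KL(P‖P⃖) ≥ KL(P‖P⃗)`. -/
theorem ais_kl_decomposition (d M : ℕ)
    (πs : Fin (M + 1) → EuclideanSpace ℝ (Fin d) → ℝ)
    (hπ_pos : ∀ ℓ x, 0 < πs ℓ x) (hπ_meas : ∀ ℓ, Measurable (πs ℓ))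
    (hπ_norm : ∀ ℓ, ∫ x, πs ℓ x = 1)
    (F Fstar : Fin M → EuclideanSpace ℝ (Fin d) → EuclideanSpace ℝ (Fin d) → ℝ)
    (hF_meas : ∀ ℓ, Measurable (Function.uncurry (F ℓ)))
    (hFs_meas : ∀ ℓ, Measurable (Function.uncurry (Fstar ℓ)))
    (hF_pos : ∀ ℓ x y, 0 < F ℓ x y) (hFs_pos : ∀ ℓ x y, 0 < Fstar ℓ x y)
    (hF_kernel : ∀ ℓ x, ∫ y, F ℓ x y = 1) (hFs_kernel : ∀ ℓ x, ∫ y, Fstar ℓ x y = 1)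
    -- `F_ℓ` leaves `π_{θ_ℓ}` invariant:
    (hF_inv : ∀ ℓ y, ∫ x, πs ℓ.succ x * F ℓ x y = πs ℓ.succ y)
    -- `F*_ℓ` transports `π_{θ_{ℓ-1}}` to `π_{θ_ℓ}`:
    (hFs_transport : ∀ ℓ y, ∫ x, πs ℓ.castSucc x * Fstar ℓ x y = πs ℓ.succ y)
    (p pr pl : (Fin (M + 1) → EuclideanSpace ℝ (Fin d)) → ℝ)
    (hp : ∀ x, p x = πs 0 (x 0) * ∏ ℓ : Fin M, Fstar ℓ (x ℓ.castSucc) (x ℓ.succ))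
    (hpr : ∀ x, pr x = πs 0 (x 0) * ∏ ℓ : Fin M, F ℓ (x ℓ.castSucc) (x ℓ.succ))
    (hpl : ∀ x, pl x = πs (Fin.last M) (x (Fin.last M)) *
      ∏ ℓ : Fin M, (πs ℓ.succ (x ℓ.castSucc) / πs ℓ.succ (x ℓ.succ)) *
        F ℓ (x ℓ.castSucc) (x ℓ.succ))
    (hint_pr : Integrable (fun x => p x * Real.log (p x / pr x)) volume)
    (hint_marg : ∀ ℓ : Fin M, Integrable
      (fun y => πs ℓ.castSucc y * Real.log (πs ℓ.castSucc y / πs ℓ.succ y)) volume) :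
    ((∫ x, p x * Real.log (p x / pl x)) =
      (∫ x, p x * Real.log (p x / pr x)) +
        ∑ ℓ : Fin M, ∫ y, πs ℓ.castSucc y * Real.log (πs ℓ.castSucc y / πs ℓ.succ y)) ∧
    (∫ x, p x * Real.log (p x / pr x)) ≤ ∫ x, p x * Real.log (p x / pl x) :=
  ais_kl_decomposition_general d M πs hπ_pos hπ_meas hπ_norm F Fstar hFs_meas hF_pos hFs_pos
    hFs_kernel hFs_transport p pr pl hp hpr hpl hint_pr hint_marg
end

section
/- Let π_s = w(s)·N(0, s) + (1-w(s))·N(sm, s) on ℝ, where w(s) = 1/(1 + exp(-(1-s)m²/2)), s ∈ [0.9, 0.99], and m is sufficiently large. Then for all x in the interval [m/2 - 0.1, m/2 + 0.1], the density f_s(x) satisfies f_s(x) ≤ C·exp(-m²/8) for some universal constant C. -/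
/-!
Since `√s · √(2π) ≥ 1`, each component is at most its weight times its Gaussian factor. Near the
midpoint `m/2` the first Gaussian factor is `exp(-x²/(2s)) ≤ exp(-m²/8)`, while the weight of the
second component is at most `exp(-(1-s)m²/2)`, and `(sm - x)²/s + (1-s)m² ≥ m²/4` there: at
`x = m/2` the left side equals `m²/(4s)`, and the slack `(1/s - 1)m²/4` absorbs the window width.
-/

open Real Set

theorem one_sub_one_div_one_add_le {E : ℝ} (hE : 0 ≤ E) : 1 - 1 / (1 + E) ≤ E := by
  rw [one_sub_div (by positivity), add_sub_cancel_left]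
  exact div_le_self hE (by linarith)

theorem div_sqrt_mul_inv_sqrt_two_pi_mul_le {a s y : ℝ} (ha : 0 ≤ a) (hy : 0 ≤ y)
    (hs : (2 * π)⁻¹ ≤ s) : a / √s * ((√(2 * π))⁻¹ * y) ≤ a * y := by
  have h2π : 0 < 2 * π := by positivity
  have hs₀ : 0 < s := (inv_pos.2 h2π).trans_le hs
  have hone : 1 ≤ √s * √(2 * π) := by
    rw [← sqrt_mul hs₀.le, one_le_sqrt, ← inv_le_iff_one_le_mul₀ h2π]
    exact hs
  calc a / √s * ((√(2 * π))⁻¹ * y) = a * y / (√s * √(2 * π)) := by field_simp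
    _ ≤ a * y := div_le_self (by positivity) hone

theorem div_sqrt_sq {y s : ℝ} (hs : 0 ≤ s) : (y / √s) ^ 2 = y ^ 2 / s := by
  rw [div_pow, sq_sqrt hs]

variable {m s x : ℝ}

theorem sq_div_four_le_sq_div (hm : 100 ≤ m) (hs₀ : 0 < s) (hs : s ≤ 0.99)
    (hx : m / 2 - 0.1 ≤ x) : m ^ 2 / 4 ≤ x ^ 2 / s := by
  rw [div_le_div_iff₀ (by norm_num) hs₀]
  nlinarith [mul_le_mul_of_nonneg_right hs (sq_nonneg m)]

theorem sq_div_four_le_sq_sub_div_add (hm : 100 ≤ m) (hs : s ∈ Icc 0.9 0.99)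
    (hx : x ≤ m / 2 + 0.1) : m ^ 2 / 4 ≤ (x - s * m) ^ 2 / s + (1 - s) * m ^ 2 := by
  obtain ⟨hs₁, hs₂⟩ := hs
  have hgap : (s - 1 / 2) * m - 0.1 ≤ s * m - x := by linarith
  have hgap₀ : 0 ≤ (s - 1 / 2) * m - 0.1 := by nlinarith
  have hsq := pow_le_pow_left₀ hgap₀ hgap 2
  rw [← sub_le_iff_le_add, le_div_iff₀ (by linarith)]
  -- `((s - 1/2)m - 0.1)² + s(1-s)m² - sm²/4 = (1-s)m²/4 - 0.2(s - 1/2)m + 0.01`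
  nlinarith [mul_le_mul_of_nonneg_right hs₂ (sq_nonneg m)]

theorem exp_neg_div_sqrt_sq_le (hm : 100 ≤ m) (hs₀ : 0 < s) (hs : s ≤ 0.99)
    (hx : m / 2 - 0.1 ≤ x) : exp (-(x / √s) ^ 2 / 2) ≤ exp (-m ^ 2 / 8) := by
  rw [exp_le_exp, div_sqrt_sq hs₀.le]
  linarith [sq_div_four_le_sq_div hm hs₀ hs hx]

theorem exp_mul_exp_neg_sub_div_sqrt_sq_le (hm : 100 ≤ m) (hs : s ∈ Icc 0.9 0.99)
    (hx : x ≤ m / 2 + 0.1) :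
    exp (-(1 - s) * m ^ 2 / 2) * exp (-((x - s * m) / √s) ^ 2 / 2) ≤ exp (-m ^ 2 / 8) := by
  rw [← exp_add, exp_le_exp, div_sqrt_sq (by linarith [hs.1])]
  linarith [sq_div_four_le_sq_sub_div_add hm hs hx]

/-- For the Gaussian mixture `π_s = w(s)·N(0,s) + (1-w(s))·N(sm,s)` with
`w(s) = 1/(1+exp(-(1-s)m²/2))`, for all sufficiently large `m`, all `s ∈ [0.9, 0.99]`, and
all `x ∈ [m/2 - 0.1, m/2 + 0.1]`, the density satisfies `f_s(x) ≤ C·exp(-m²/8)` for a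
universal constant `C`. -/
theorem mixture_density_bound_near_midpoint :
    ∃ C > (0 : ℝ), ∃ m₀ : ℝ, ∀ m ≥ m₀, ∀ s ∈ Set.Icc (0.9 : ℝ) 0.99,
      ∀ x ∈ Set.Icc (m / 2 - 0.1) (m / 2 + 0.1),
        (1 / (1 + Real.exp (-(1 - s) * m ^ 2 / 2))) / Real.sqrt s *
            ((Real.sqrt (2 * π))⁻¹ * Real.exp (-(x / Real.sqrt s) ^ 2 / 2)) +
          (1 - 1 / (1 + Real.exp (-(1 - s) * m ^ 2 / 2))) / Real.sqrt s *
            ((Real.sqrt (2 * π))⁻¹ * Real.exp (-((x - s * m) / Real.sqrt s) ^ 2 / 2)) ≤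
        C * Real.exp (-m ^ 2 / 8) := by
  refine ⟨2, two_pos, 100, fun m hm s hs x hx => ?_⟩
  set E := exp (-(1 - s) * m ^ 2 / 2)
  have hw : 1 / (1 + E) ≤ 1 := by
    rw [div_le_one (by positivity)]
    linarith [exp_pos (-(1 - s) * m ^ 2 / 2)]
  have hs_ge : (2 * π)⁻¹ ≤ s := by
    have : (2 * π)⁻¹ ≤ (2 * 3)⁻¹ := by gcongr; exact pi_gt_three.le
    linarith [hs.1]
  calc _ ≤ 1 / (1 + E) * exp (-(x / √s) ^ 2 / 2) +
        (1 - 1 / (1 + E)) * exp (-((x - s * m) / √s) ^ 2 / 2) :=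
      add_le_add (div_sqrt_mul_inv_sqrt_two_pi_mul_le (by positivity) (exp_pos _).le hs_ge)
        (div_sqrt_mul_inv_sqrt_two_pi_mul_le (sub_nonneg.2 hw) (exp_pos _).le hs_ge)
    _ ≤ 1 * exp (-m ^ 2 / 8) + E * exp (-((x - s * m) / √s) ^ 2 / 2) :=
      add_le_add
        (mul_le_mul hw (exp_neg_div_sqrt_sq_le hm (by linarith [hs.1]) hs.2 hx.1)
          (exp_pos _).le zero_le_one)
        (mul_le_mul_of_nonneg_right (one_sub_one_div_one_add_le (exp_pos _).le) (exp_pos _).le)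
    _ ≤ 2 * exp (-m ^ 2 / 8) := by
      linarith [exp_mul_exp_neg_sub_div_sqrt_sq_le hm hs hx.2]
end

section
/- Let μ, ν be probability measures with ν ≪ μ, and for q > 1 define the Rényi divergence R_q(ν‖μ) = (1/(q-1))·log E_μ[(dν/dμ)^q]. Then the weak triangle inequality holds: for probability measures P⃖, P⃗, P with appropriate absolute continuity, R₂(P⃖‖P⃗) ≤ (3/2)·R₄(P⃖‖P) + R₃(P‖P⃗). -/
open MeasureTheory
open scoped ENNReal

/-- The Rényi divergence of order `q > 1`:
`R_q(ν‖μ) = (1/(q-1))·log E_μ[(dν/dμ)^q]`. -/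
noncomputable def renyiDiv {Ω : Type*} [MeasurableSpace Ω] (q : ℝ)
    (ν μ : Measure Ω) : ℝ :=
  (q - 1)⁻¹ * Real.log (∫⁻ x, ν.rnDeriv μ x ^ q ∂μ).toReal

/-- Weak triangle inequality for Rényi divergences (the instance used for path measures
`P⃖`, `P⃗`, `P`): `R₂(P⃖‖P⃗) ≤ (3/2)·R₄(P⃖‖P) + R₃(P‖P⃗)`. -/
theorem renyi_weak_triangle {Ω : Type*} [MeasurableSpace Ω]
    (Pl Pr P : Measure Ω)
    [IsProbabilityMeasure Pl] [IsProbabilityMeasure Pr] [IsProbabilityMeasure P]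
    (hPlP : Pl ≪ P) (hPPr : P ≪ Pr) (hPlPr : Pl ≪ Pr)
    (hfin4 : (∫⁻ x, Pl.rnDeriv P x ^ (4 : ℝ) ∂P) ≠ ⊤)
    (hfin3 : (∫⁻ x, P.rnDeriv Pr x ^ (3 : ℝ) ∂Pr) ≠ ⊤) :
    renyiDiv 2 Pl Pr ≤ 3 / 2 * renyiDiv 4 Pl P + renyiDiv 3 P Pr := by
  set f := Pl.rnDeriv P with hf
  set g := P.rnDeriv Pr with hg
  have hfm : Measurable f := Measure.measurable_rnDeriv _ _
  have hgm : Measurable g := Measure.measurable_rnDeriv _ _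
  set A := ∫⁻ x, f x ^ (4 : ℝ) ∂P with hA
  set B := ∫⁻ x, g x ^ (3 : ℝ) ∂Pr with hB
  set C := ∫⁻ x, Pl.rnDeriv Pr x ^ (2 : ℝ) ∂Pr with hC
  -- rnDeriv multiplication
  have hmul : Pl.rnDeriv Pr =ᵐ[Pr] fun x => f x * g x :=
    (Measure.rnDeriv_mul_rnDeriv hPlP).symm
  -- C = ∫ f² g ∂P
  have hCeq : C = ∫⁻ x, f x ^ (2 : ℝ) * g x ∂P := by
    have h1 : C = ∫⁻ x, (f x * g x) ^ (2 : ℝ) ∂Pr := by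
      refine lintegral_congr_ae ?_
      filter_upwards [hmul] with x hx
      rw [hx]
    have h2 : ∀ x, (f x * g x) ^ (2 : ℝ) = g x * (f x ^ (2 : ℝ) * g x) := by
      intro x
      rw [ENNReal.mul_rpow_of_nonneg _ _ (by norm_num : (0:ℝ) ≤ 2)]
      have : g x ^ (2 : ℝ) = g x * g x := by
        rw [show (2:ℝ) = 1 + 1 by norm_num,
          ENNReal.rpow_add_of_nonneg _ _ (by norm_num) (by norm_num), ENNReal.rpow_one]
      rw [this]; ring
    rw [h1]
    simp_rw [h2]
    exact lintegral_rnDeriv_mul hPPr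
      ((hfm.pow_const _).mul hgm).aemeasurable
  -- ∫ g² ∂P = B
  have hgB : ∫⁻ x, g x ^ (2 : ℝ) ∂P = B := by
    have h2 : ∀ x, g x ^ (3 : ℝ) = g x * g x ^ (2 : ℝ) := by
      intro x
      rw [show (3:ℝ) = 1 + 2 by norm_num,
        ENNReal.rpow_add_of_nonneg _ _ (by norm_num) (by norm_num), ENNReal.rpow_one]
    rw [hB]
    simp_rw [h2]
    exact (lintegral_rnDeriv_mul hPPr (hgm.pow_const _).aemeasurable).symm
  -- Cauchy–Schwarz
  have hCS : C ≤ A ^ (1/2 : ℝ) * B ^ (1/2 : ℝ) := by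
    rw [hCeq]
    calc ∫⁻ x, f x ^ (2:ℝ) * g x ∂P
        ≤ (∫⁻ x, (f x ^ (2:ℝ)) ^ (2:ℝ) ∂P) ^ (1/2:ℝ) * (∫⁻ x, g x ^ (2:ℝ) ∂P) ^ (1/2:ℝ) := by
          exact ENNReal.lintegral_mul_le_Lp_mul_Lq P (Real.holderConjugate_iff_eq_conjExponent
            (by norm_num) |>.mpr (by norm_num)) (hfm.pow_const _).aemeasurable hgm.aemeasurable
      _ = A ^ (1/2:ℝ) * B ^ (1/2:ℝ) := by
          rw [hgB]
          congr 1
          congr 1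
          refine lintegral_congr fun x => ?_
          rw [← ENNReal.rpow_mul]
          norm_num
  have hABtop : A ^ (1/2:ℝ) * B ^ (1/2:ℝ) ≠ ⊤ := by
    exact ENNReal.mul_ne_top (ENNReal.rpow_ne_top_of_nonneg (by norm_num) hfin4)
      (ENNReal.rpow_ne_top_of_nonneg (by norm_num) hfin3)
  have hCtop : C ≠ ⊤ := fun h => hABtop (top_le_iff.mp (h ▸ hCS))
  -- lower bound 1 ≤ C
  have hint1 : ∫⁻ x, Pl.rnDeriv Pr x ∂Pr = 1 := by
    rw [Measure.lintegral_rnDeriv hPlPr]; simp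
  have hone : (1 : ℝ≥0∞) ≤ C ^ (1/2 : ℝ) := by
    have := ENNReal.lintegral_mul_le_Lp_mul_Lq Pr (Real.holderConjugate_iff_eq_conjExponent
      (p := 2) (q := 2) (by norm_num) |>.mpr (by norm_num))
      (Measure.measurable_rnDeriv Pl Pr).aemeasurable
      (aemeasurable_const (b := (1:ℝ≥0∞)))
    have h' : (1:ℝ≥0∞) ≤ (∫⁻ x, Pl.rnDeriv Pr x ^ (2:ℝ) ∂Pr) ^ (1/2:ℝ) := by
      simpa [hint1] using this
    rw [hC]
    exact h'
  have hC1 : (1 : ℝ≥0∞) ≤ C := by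
    have h2 := ENNReal.rpow_le_rpow hone (by norm_num : (0:ℝ) ≤ 2)
    rw [ENNReal.one_rpow, ← ENNReal.rpow_mul] at h2
    norm_num at h2
    exact h2
  -- to reals
  have hCr : (1:ℝ) ≤ C.toReal := by
    have := ENNReal.toReal_mono hCtop hC1
    simpa using this
  have hCSr : C.toReal ≤ A.toReal ^ (1/2:ℝ) * B.toReal ^ (1/2:ℝ) := by
    have := ENNReal.toReal_mono hABtop hCS
    rwa [ENNReal.toReal_mul, ← ENNReal.toReal_rpow, ← ENNReal.toReal_rpow] at this
  have hA0 : 0 < A.toReal := by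
    by_contra h
    push_neg at h
    have hA0' : A.toReal = 0 := le_antisymm h ENNReal.toReal_nonneg
    rw [hA0', Real.zero_rpow (by norm_num), zero_mul] at hCSr
    linarith
  have hB0 : 0 < B.toReal := by
    by_contra h
    push_neg at h
    have hB0' : B.toReal = 0 := le_antisymm h ENNReal.toReal_nonneg
    rw [hB0', Real.zero_rpow (by norm_num), mul_zero] at hCSr
    linarith
  -- conclude
  have hlog : Real.log C.toReal ≤ 1/2 * Real.log A.toReal + 1/2 * Real.log B.toReal := by
    have h := Real.log_le_log (by linarith) hCSr
    rwa [Real.log_mul (by positivity) (by positivity), Real.log_rpow hA0,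
      Real.log_rpow hB0] at h
  simp only [renyiDiv]
  have eA : (∫⁻ x, Pl.rnDeriv P x ^ (4:ℝ) ∂P).toReal = A.toReal := rfl
  have eB : (∫⁻ x, P.rnDeriv Pr x ^ (3:ℝ) ∂Pr).toReal = B.toReal := rfl
  have eC : (∫⁻ x, Pl.rnDeriv Pr x ^ (2:ℝ) ∂Pr).toReal = C.toReal := rfl
  rw [eA, eB, eC]
  norm_num
  linarith
end
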